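/- arXiv:2206.00530 — 4 statements merged into one kernel-verified Lean document; each statement's English description precedes it below -/
import Mathlib

section
/- For every permutation σ ∈ S_n, the map σ·(a,b) = (a∘σ⁻¹, b + Σ_{i<j with σ(i)>σ(j)} a(i)·a(j)) is a group automorphism of H_n satisfying σ·x_i = x_{σ(i)} and σ·ε = ε, and these maps define an action of S_n on H_n by automorphisms (i.e., (στ)·h = σ·(τ·h) and 1·h = h). -/
open Finset Equiv

/-- `Qf n a b = ∑_{i < j} a i * b j`. -/
def Qf (n : ℕ) (a b : Fin n → ZMod 2) : ZMod 2 :=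
  ∑ p ∈ Finset.univ.filter (fun p : Fin n × Fin n => p.1 < p.2), a p.1 * b p.2

/-- The underlying set of the group `H n`: pairs `(a, b)` with
`a : Fin n → ZMod 2` and `b : ZMod 2`. -/
@[ext] structure H (n : ℕ) where
  a : Fin n → ZMod 2
  b : ZMod 2

namespace H

variable {n : ℕ}

instance : Mul (H n) := ⟨fun x y => ⟨x.a + y.a, x.b + y.b + Qf n x.a y.a⟩⟩
instance : One (H n) := ⟨⟨0, 0⟩⟩
instance : Inv (H n) := ⟨fun x => ⟨x.a, x.b + Qf n x.a x.a⟩⟩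

@[simp] lemma mul_a (x y : H n) : (x * y).a = x.a + y.a := rfl
@[simp] lemma mul_b (x y : H n) : (x * y).b = x.b + y.b + Qf n x.a y.a := rfl
@[simp] lemma one_a : (1 : H n).a = 0 := rfl
@[simp] lemma one_b : (1 : H n).b = 0 := rfl
@[simp] lemma inv_a (x : H n) : (x⁻¹).a = x.a := rfl
@[simp] lemma inv_b (x : H n) : (x⁻¹).b = x.b + Qf n x.a x.a := rfl

lemma Qf_add_left (a a' b : Fin n → ZMod 2) :
    Qf n (a + a') b = Qf n a b + Qf n a' b := by
  simp [Qf, add_mul, Finset.sum_add_distrib]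

lemma Qf_add_right (a b b' : Fin n → ZMod 2) :
    Qf n a (b + b') = Qf n a b + Qf n a b' := by
  simp [Qf, mul_add, Finset.sum_add_distrib]

@[simp] lemma Qf_zero_left (b : Fin n → ZMod 2) : Qf n 0 b = 0 := by simp [Qf]
@[simp] lemma Qf_zero_right (a : Fin n → ZMod 2) : Qf n a 0 = 0 := by simp [Qf]

instance : Group (H n) where
  mul_assoc x y z := by
    ext i
    · simp [add_assoc]
    · simp only [mul_b, mul_a, Qf_add_left, Qf_add_right]
      ring
  one_mul x := by ext i <;> simp
  mul_one x := by ext i <;> simp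
  inv_mul_cancel x := by
    ext i
    · show x.a i + x.a i = 0
      generalize x.a i = u; revert u; decide
    · show x.b + Qf n x.a x.a + x.b + Qf n x.a x.a = 0
      generalize x.b = u; generalize Qf n x.a x.a = q
      revert u q; decide

end H

/-- The generator `x_i = (e_i, 0)` of `H n`. -/
def xgen (n : ℕ) (i : Fin n) : H n := ⟨Pi.single i 1, 0⟩

/-- The central element `ε = (0, 1)` of `H n`. -/
def eps (n : ℕ) : H n := ⟨0, 1⟩

/-- `Rf n σ a = ∑_{i < j, σ i > σ j} a i * a j`. -/
def Rf (n : ℕ) (σ : Equiv.Perm (Fin n)) (a : Fin n → ZMod 2) : ZMod 2 :=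
  ∑ p ∈ Finset.univ.filter
      (fun p : Fin n × Fin n => p.1 < p.2 ∧ σ p.2 < σ p.1), a p.1 * a p.2

/-- The action of `σ ∈ Sₙ` on `H n`:
`σ · (a, b) = (a ∘ σ⁻¹, b + ∑_{i<j, σ i > σ j} a i * a j)`. -/
def actH (n : ℕ) (σ : Equiv.Perm (Fin n)) (g : H n) : H n :=
  ⟨g.a ∘ σ.symm, g.b + Rf n σ g.a⟩

section Lemmas

open Finset Equiv

variable {n : ℕ}

private lemma two_cancel : ∀ x : ZMod 2, x + x = 0 := by decide

/-- Reindexing a pair-sum by a permutation acting diagonally. -/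
private lemma sum_pair_perm (τ : Equiv.Perm (Fin n)) (c : Fin n × Fin n → Prop)
    [DecidablePred c] (f : Fin n → Fin n → ZMod 2) :
    ∑ p ∈ Finset.univ.filter (fun p : Fin n × Fin n => c (τ p.1, τ p.2)), f (τ p.1) (τ p.2)
      = ∑ p ∈ Finset.univ.filter c, f p.1 p.2 := by
  apply Finset.sum_equiv (Equiv.prodCongr τ τ) <;> simp

/-- Reindexing a pair-sum by the swap. -/
private lemma sum_pair_swap (c : Fin n × Fin n → Prop)
    [DecidablePred c] (f : Fin n → Fin n → ZMod 2) :
    ∑ p ∈ Finset.univ.filter c, f p.1 p.2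
      = ∑ p ∈ Finset.univ.filter (fun p : Fin n × Fin n => c (p.2, p.1)), f p.2 p.1 := by
  apply Finset.sum_equiv (Equiv.prodComm (Fin n) (Fin n)) <;> simp

end Lemmas

section Lemmas2

open Finset Equiv

variable {n : ℕ}

private lemma flip_lt {x y : Fin n} (hne : x ≠ y) : ¬ x < y ↔ y < x :=
  ⟨fun h => lt_of_le_of_ne (not_lt.mp h) hne.symm, fun h h' => absurd h' (asymm h)⟩

private lemma Rf_add (σ : Equiv.Perm (Fin n)) (a b : Fin n → ZMod 2) :
    Rf n σ (a + b) = Rf n σ a + Rf n σ b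
      + ∑ p ∈ Finset.univ.filter (fun p : Fin n × Fin n => p.1 < p.2 ∧ σ p.2 < σ p.1),
          (a p.1 * b p.2 + b p.1 * a p.2) := by
  simp only [Rf, ← Finset.sum_add_distrib]
  apply Finset.sum_congr rfl
  intro p _
  simp only [Pi.add_apply]
  ring

private lemma Qf_act (σ : Equiv.Perm (Fin n)) (a b : Fin n → ZMod 2) :
    Qf n (a ∘ σ.symm) (b ∘ σ.symm)
      = Qf n a b
        + ∑ p ∈ Finset.univ.filter (fun p : Fin n × Fin n => p.1 < p.2 ∧ σ p.2 < σ p.1),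
            (a p.1 * b p.2 + b p.1 * a p.2) := by
  classical
  have h1 : Qf n (a ∘ σ.symm) (b ∘ σ.symm)
      = ∑ p ∈ Finset.univ.filter (fun p : Fin n × Fin n => σ p.1 < σ p.2),
          a p.1 * b p.2 := by
    rw [Qf]
    apply Finset.sum_equiv (Equiv.prodCongr σ.symm σ.symm) <;> simp
  have h2 : ∑ p ∈ Finset.univ.filter (fun p : Fin n × Fin n => σ p.1 < σ p.2), a p.1 * b p.2
      = ∑ p ∈ Finset.univ.filter
            (fun p : Fin n × Fin n => σ p.1 < σ p.2 ∧ p.1 < p.2), a p.1 * b p.2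
        + ∑ p ∈ Finset.univ.filter
            (fun p : Fin n × Fin n => σ p.1 < σ p.2 ∧ p.2 < p.1), a p.1 * b p.2 := by
    rw [← Finset.sum_filter_add_sum_filter_not
      (Finset.univ.filter (fun p : Fin n × Fin n => σ p.1 < σ p.2))
      (fun p : Fin n × Fin n => p.1 < p.2)]
    congr 1
    · rw [Finset.filter_filter]
    · rw [Finset.filter_filter]
      refine Finset.sum_congr (Finset.filter_congr ?_) (fun _ _ => rfl)
      intro p _
      constructor
      · rintro ⟨h1', h2'⟩
        have hne : p.1 ≠ p.2 := fun h => absurd (h ▸ h1' : σ p.1 < σ p.1) (lt_irrefl _)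
        exact ⟨h1', (flip_lt hne).mp h2'⟩
      · rintro ⟨h1', h2'⟩
        exact ⟨h1', fun h => absurd h (asymm h2')⟩
  have h3 : ∑ p ∈ Finset.univ.filter
        (fun p : Fin n × Fin n => σ p.1 < σ p.2 ∧ p.2 < p.1), a p.1 * b p.2
      = ∑ p ∈ Finset.univ.filter
            (fun p : Fin n × Fin n => p.1 < p.2 ∧ σ p.2 < σ p.1), b p.1 * a p.2 := by
    rw [sum_pair_swap (fun p : Fin n × Fin n => σ p.1 < σ p.2 ∧ p.2 < p.1)
      (fun i j => a i * b j)]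
    refine Finset.sum_congr (Finset.filter_congr ?_) ?_
    · intro p _
      exact ⟨fun h => ⟨h.2, h.1⟩, fun h => ⟨h.2, h.1⟩⟩
    · intro p _; ring
  have h4 : Qf n a b
      = ∑ p ∈ Finset.univ.filter
            (fun p : Fin n × Fin n => σ p.1 < σ p.2 ∧ p.1 < p.2), a p.1 * b p.2
        + ∑ p ∈ Finset.univ.filter
            (fun p : Fin n × Fin n => p.1 < p.2 ∧ σ p.2 < σ p.1), a p.1 * b p.2 := by
    rw [Qf, ← Finset.sum_filter_add_sum_filter_not
      (Finset.univ.filter (fun p : Fin n × Fin n => p.1 < p.2))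
      (fun p : Fin n × Fin n => σ p.1 < σ p.2)]
    congr 1
    · rw [Finset.filter_filter]
      refine Finset.sum_congr (Finset.filter_congr ?_) (fun _ _ => rfl)
      intro p _
      exact ⟨fun h => ⟨h.2, h.1⟩, fun h => ⟨h.2, h.1⟩⟩
    · rw [Finset.filter_filter]
      refine Finset.sum_congr (Finset.filter_congr ?_) (fun _ _ => rfl)
      intro p _
      constructor
      · rintro ⟨h1', h2'⟩
        have hne : σ p.1 ≠ σ p.2 := fun h =>
          absurd h1' (by rw [σ.injective h]; exact lt_irrefl _)
        exact ⟨h1', (flip_lt hne).mp h2'⟩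
      · rintro ⟨h1', h2'⟩
        exact ⟨h1', fun h => absurd h (asymm h2')⟩
  have h5 : ∑ p ∈ Finset.univ.filter
        (fun p : Fin n × Fin n => p.1 < p.2 ∧ σ p.2 < σ p.1),
          (a p.1 * b p.2 + b p.1 * a p.2)
      = ∑ p ∈ Finset.univ.filter
            (fun p : Fin n × Fin n => p.1 < p.2 ∧ σ p.2 < σ p.1), a p.1 * b p.2
        + ∑ p ∈ Finset.univ.filter
            (fun p : Fin n × Fin n => p.1 < p.2 ∧ σ p.2 < σ p.1), b p.1 * a p.2 :=
    Finset.sum_add_distrib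
  rw [h1, h2, h3, h4, h5]
  have h6 := two_cancel (∑ p ∈ Finset.univ.filter
      (fun p : Fin n × Fin n => p.1 < p.2 ∧ σ p.2 < σ p.1), a p.1 * b p.2)
  linear_combination -h6

end Lemmas2

section Lemmas3

open Finset Equiv

variable {n : ℕ}

private lemma Rf_comp (σ τ : Equiv.Perm (Fin n)) (a : Fin n → ZMod 2) :
    Rf n (σ * τ) a = Rf n τ a + Rf n σ (a ∘ τ.symm) := by
  classical
  -- rewrite `Rf (σ * τ)`
  have hA : Rf n (σ * τ) a
      = ∑ p ∈ Finset.univ.filter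
          (fun p : Fin n × Fin n => p.1 < p.2 ∧ σ (τ p.2) < σ (τ p.1)), a p.1 * a p.2 := by
    rw [Rf]
    refine Finset.sum_congr (Finset.filter_congr ?_) (fun _ _ => rfl)
    intro p _
    simp [Equiv.Perm.mul_apply]
  -- split it according to the relative order of `τ p.1`, `τ p.2`
  have hB : ∑ p ∈ Finset.univ.filter
        (fun p : Fin n × Fin n => p.1 < p.2 ∧ σ (τ p.2) < σ (τ p.1)), a p.1 * a p.2
      = ∑ p ∈ Finset.univ.filter
            (fun p : Fin n × Fin n =>
              (p.1 < p.2 ∧ σ (τ p.2) < σ (τ p.1)) ∧ τ p.1 < τ p.2), a p.1 * a p.2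
        + ∑ p ∈ Finset.univ.filter
            (fun p : Fin n × Fin n =>
              (p.1 < p.2 ∧ σ (τ p.2) < σ (τ p.1)) ∧ τ p.2 < τ p.1), a p.1 * a p.2 := by
    rw [← Finset.sum_filter_add_sum_filter_not
      (Finset.univ.filter
        (fun p : Fin n × Fin n => p.1 < p.2 ∧ σ (τ p.2) < σ (τ p.1)))
      (fun p : Fin n × Fin n => τ p.1 < τ p.2)]
    congr 1
    · rw [Finset.filter_filter]
    · rw [Finset.filter_filter]
      refine Finset.sum_congr (Finset.filter_congr ?_) (fun _ _ => rfl)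
      intro p _
      constructor
      · rintro ⟨h1, h2⟩
        have hne : τ p.1 ≠ τ p.2 := fun h => absurd h1.1 (by
          have := τ.injective h; rw [this]; exact lt_irrefl _)
        exact ⟨h1, (flip_lt hne).mp h2⟩
      · rintro ⟨h1, h2⟩
        exact ⟨h1, fun h => absurd h (asymm h2)⟩
  -- split `Rf τ a` according to the relative order of `στ p.1`, `στ p.2`
  have hC : Rf n τ a
      = ∑ p ∈ Finset.univ.filter
            (fun p : Fin n × Fin n =>
              (p.1 < p.2 ∧ τ p.2 < τ p.1) ∧ σ (τ p.1) < σ (τ p.2)), a p.1 * a p.2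
        + ∑ p ∈ Finset.univ.filter
            (fun p : Fin n × Fin n =>
              (p.1 < p.2 ∧ σ (τ p.2) < σ (τ p.1)) ∧ τ p.2 < τ p.1), a p.1 * a p.2 := by
    rw [Rf, ← Finset.sum_filter_add_sum_filter_not
      (Finset.univ.filter
        (fun p : Fin n × Fin n => p.1 < p.2 ∧ τ p.2 < τ p.1))
      (fun p : Fin n × Fin n => σ (τ p.1) < σ (τ p.2))]
    congr 1
    · rw [Finset.filter_filter]
    · rw [Finset.filter_filter]
      refine Finset.sum_congr (Finset.filter_congr ?_) (fun _ _ => rfl)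
      intro p _
      constructor
      · rintro ⟨h1, h2⟩
        have hne : σ (τ p.1) ≠ σ (τ p.2) := fun h => absurd h1.2 (by
          have := σ.injective h; rw [this]; exact lt_irrefl _)
        exact ⟨⟨h1.1, (flip_lt hne).mp h2⟩, h1.2⟩
      · rintro ⟨h1, h2⟩
        exact ⟨⟨h1.1, h2⟩, fun h => absurd h (asymm h1.2)⟩
  -- reindex `Rf σ (a ∘ τ.symm)` and split according to the order of `p.1`, `p.2`
  have hD : Rf n σ (a ∘ τ.symm)
      = ∑ p ∈ Finset.univ.filter
          (fun p : Fin n × Fin n => τ p.1 < τ p.2 ∧ σ (τ p.2) < σ (τ p.1)),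
            a p.1 * a p.2 := by
    rw [Rf]
    apply Finset.sum_equiv (Equiv.prodCongr τ.symm τ.symm) <;> simp
  have hE : ∑ p ∈ Finset.univ.filter
        (fun p : Fin n × Fin n => τ p.1 < τ p.2 ∧ σ (τ p.2) < σ (τ p.1)), a p.1 * a p.2
      = ∑ p ∈ Finset.univ.filter
            (fun p : Fin n × Fin n =>
              (p.1 < p.2 ∧ σ (τ p.2) < σ (τ p.1)) ∧ τ p.1 < τ p.2), a p.1 * a p.2
        + ∑ p ∈ Finset.univ.filter
            (fun p : Fin n × Fin n =>
              (τ p.1 < τ p.2 ∧ σ (τ p.2) < σ (τ p.1)) ∧ p.2 < p.1), a p.1 * a p.2 := by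
    rw [← Finset.sum_filter_add_sum_filter_not
      (Finset.univ.filter
        (fun p : Fin n × Fin n => τ p.1 < τ p.2 ∧ σ (τ p.2) < σ (τ p.1)))
      (fun p : Fin n × Fin n => p.1 < p.2)]
    congr 1
    · rw [Finset.filter_filter]
      refine Finset.sum_congr (Finset.filter_congr ?_) (fun _ _ => rfl)
      intro p _
      exact ⟨fun h => ⟨⟨h.2, h.1.2⟩, h.1.1⟩, fun h => ⟨⟨h.2, h.1.2⟩, h.1.1⟩⟩
    · rw [Finset.filter_filter]
      refine Finset.sum_congr (Finset.filter_congr ?_) (fun _ _ => rfl)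
      intro p _
      constructor
      · rintro ⟨h1, h2⟩
        have hne : p.1 ≠ p.2 := fun h => absurd h1.1 (by rw [h]; exact lt_irrefl _)
        exact ⟨h1, (flip_lt hne).mp h2⟩
      · rintro ⟨h1, h2⟩
        exact ⟨h1, fun h => absurd h (asymm h2)⟩
  -- swap the second piece of `hE`
  have hF : ∑ p ∈ Finset.univ.filter
        (fun p : Fin n × Fin n =>
          (τ p.1 < τ p.2 ∧ σ (τ p.2) < σ (τ p.1)) ∧ p.2 < p.1), a p.1 * a p.2
      = ∑ p ∈ Finset.univ.filter
            (fun p : Fin n × Fin n =>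
              (p.1 < p.2 ∧ τ p.2 < τ p.1) ∧ σ (τ p.1) < σ (τ p.2)), a p.1 * a p.2 := by
    rw [sum_pair_swap
      (fun p : Fin n × Fin n => (τ p.1 < τ p.2 ∧ σ (τ p.2) < σ (τ p.1)) ∧ p.2 < p.1)
      (fun i j => a i * a j)]
    refine Finset.sum_congr (Finset.filter_congr ?_) ?_
    · intro p _
      exact ⟨fun h => ⟨⟨h.2, h.1.1⟩, h.1.2⟩, fun h => ⟨⟨h.1.2, h.2⟩, h.1.1⟩⟩
    · intro p _; ring
  rw [hA, hB, hC, hD, hE, hF]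
  have h6 := two_cancel (∑ p ∈ Finset.univ.filter
      (fun p : Fin n × Fin n =>
        (p.1 < p.2 ∧ τ p.2 < τ p.1) ∧ σ (τ p.1) < σ (τ p.2)), a p.1 * a p.2)
  linear_combination -h6

end Lemmas3

/-- The group `G n = H n ⋊ Sₙ` (the semidirect product for the action `actH`). -/
@[ext] structure G (n : ℕ) where
  h : H n
  s : Equiv.Perm (Fin n)

section ActLemmas

open Finset Equiv

variable {n : ℕ}

private lemma actH_mul (σ : Equiv.Perm (Fin n)) (g h : H n) :
    actH n σ (g * h) = actH n σ g * actH n σ h := by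
  refine H.ext ?_ ?_
  · funext i; rfl
  · show (g.b + h.b + Qf n g.a h.a) + Rf n σ (g.a + h.a)
       = (g.b + Rf n σ g.a) + (h.b + Rf n σ h.a) + Qf n (g.a ∘ σ.symm) (h.a ∘ σ.symm)
    rw [Rf_add, Qf_act]
    ring

private lemma actH_one_perm (g : H n) : actH n (1 : Equiv.Perm (Fin n)) g = g := by
  refine H.ext ?_ ?_
  · funext i; rfl
  · show g.b + Rf n 1 g.a = g.b
    have h0 : Rf n (1 : Equiv.Perm (Fin n)) g.a = 0 := by
      rw [Rf, Finset.filter_false_of_mem, Finset.sum_empty]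
      rintro p _ ⟨h1, h2⟩
      exact absurd h2 (asymm h1)
    rw [h0, add_zero]

private lemma actH_H_one (σ : Equiv.Perm (Fin n)) : actH n σ (1 : H n) = 1 := by
  refine H.ext ?_ ?_
  · funext i; rfl
  · show (0 : ZMod 2) + Rf n σ (0 : Fin n → ZMod 2) = 0
    simp [Rf]

private lemma actH_comp (σ τ : Equiv.Perm (Fin n)) (g : H n) :
    actH n (σ * τ) g = actH n σ (actH n τ g) := by
  refine H.ext ?_ ?_
  · funext i; rfl
  · show g.b + Rf n (σ * τ) g.a = (g.b + Rf n τ g.a) + Rf n σ (g.a ∘ τ.symm)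
    rw [Rf_comp]
    ring

end ActLemmas

namespace G

variable {n : ℕ}

instance : Mul (G n) := ⟨fun x y => ⟨x.h * actH n x.s y.h, x.s * y.s⟩⟩
instance : One (G n) := ⟨⟨1, 1⟩⟩
instance : Inv (G n) := ⟨fun x => ⟨actH n x.s⁻¹ x.h⁻¹, x.s⁻¹⟩⟩

@[simp] lemma mul_h (x y : G n) : (x * y).h = x.h * actH n x.s y.h := rfl
@[simp] lemma mul_s (x y : G n) : (x * y).s = x.s * y.s := rfl
@[simp] lemma one_h : (1 : G n).h = 1 := rfl
@[simp] lemma one_s : (1 : G n).s = 1 := rfl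

instance : Group (G n) where
  mul_assoc x y z := by
    refine G.ext ?_ ?_
    · show (x.h * actH n x.s y.h) * actH n (x.s * y.s) z.h
         = x.h * actH n x.s (y.h * actH n y.s z.h)
      rw [actH_mul, ← actH_comp]
      exact mul_assoc _ _ _
    · exact mul_assoc x.s y.s z.s
  one_mul x := by
    refine G.ext ?_ ?_
    · show (1 : H n) * actH n 1 x.h = x.h
      rw [actH_one_perm, one_mul]
    · exact one_mul x.s
  mul_one x := by
    refine G.ext ?_ ?_
    · show x.h * actH n x.s 1 = x.h
      rw [actH_H_one, mul_one]
    · exact mul_one x.s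
  inv_mul_cancel x := by
    refine G.ext ?_ ?_
    · show actH n x.s⁻¹ x.h⁻¹ * actH n x.s⁻¹ x.h = 1
      rw [← actH_mul, inv_mul_cancel, actH_H_one]
    · exact inv_mul_cancel x.s

end G

/-- The hyperoctahedral group `B n = (ZMod 2)ⁿ ⋊ Sₙ`, with
`(a₁, π₁) * (a₂, π₂) = (a₁ + a₂ ∘ π₁⁻¹, π₁ * π₂)`. -/
@[ext] structure B (n : ℕ) where
  a : Fin n → ZMod 2
  s : Equiv.Perm (Fin n)

namespace B

variable {n : ℕ}

instance : Mul (B n) := ⟨fun x y => ⟨x.a + y.a ∘ x.s.symm, x.s * y.s⟩⟩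
instance : One (B n) := ⟨⟨0, 1⟩⟩
instance : Inv (B n) := ⟨fun x => ⟨x.a ∘ x.s, x.s⁻¹⟩⟩

@[simp] lemma mul_a (x y : B n) : (x * y).a = x.a + y.a ∘ x.s.symm := rfl
@[simp] lemma mul_s (x y : B n) : (x * y).s = x.s * y.s := rfl
@[simp] lemma one_a : (1 : B n).a = 0 := rfl
@[simp] lemma one_s : (1 : B n).s = 1 := rfl

instance : Group (B n) where
  mul_assoc x y z := by
    refine B.ext ?_ ?_
    · funext i
      show x.a i + y.a (x.s.symm i) + z.a (y.s.symm (x.s.symm i))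
         = x.a i + (y.a (x.s.symm i) + z.a (y.s.symm (x.s.symm i)))
      exact add_assoc _ _ _
    · exact mul_assoc x.s y.s z.s
  one_mul x := by
    refine B.ext ?_ ?_
    · funext i
      show (0 : ZMod 2) + x.a i = x.a i
      exact zero_add _
    · exact one_mul x.s
  mul_one x := by
    refine B.ext ?_ ?_
    · funext i
      show x.a i + (0 : ZMod 2) = x.a i
      exact add_zero _
    · exact mul_one x.s
  inv_mul_cancel x := by
    refine B.ext ?_ ?_
    · funext i
      show x.a (x.s i) + x.a ((x.s⁻¹).symm i) = 0
      have h : (x.s⁻¹).symm i = x.s i := rfl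
      rw [h]
      generalize x.a (x.s i) = u; revert u; decide
    · exact inv_mul_cancel x.s

end B

/-- The projection `p : G n → B n`, `((a, b), σ) ↦ (a, σ)`. -/
def pG (n : ℕ) (g : G n) : B n := ⟨g.h.a, g.s⟩

/-- The central element `ε̂ = ((0,1), 1)` of `G n`. -/
def epsG (n : ℕ) : G n := ⟨⟨0, 1⟩, 1⟩

/-- The orbit of `k` under the cyclic group generated by `σ`, as a `Finset`. -/
noncomputable def orb (n : ℕ) (σ : Equiv.Perm (Fin n)) (k : Fin n) : Finset (Fin n) :=
  letI := Classical.decPred fun j : Fin n => ∃ m : ℤ, (σ ^ m) k = j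
  Finset.univ.filter (fun j => ∃ m : ℤ, (σ ^ m) k = j)

/-- The set of orbits of `σ` on `Fin n`. -/
noncomputable def orbs (n : ℕ) (σ : Equiv.Perm (Fin n)) : Finset (Finset (Fin n)) :=
  Finset.univ.image (orb n σ)

/-- The orbit of `k` under the group generated by the commuting permutations `σ` and `π`;
it is the union of the `σ`-orbits belonging to the orbit (under the action of the group
generated by `π` on the set of `σ`-orbits) of the `σ`-orbit of `k`. -/
noncomputable def orb2 (n : ℕ) (σ π : Equiv.Perm (Fin n)) (k : Fin n) : Finset (Fin n) :=
  letI := Classical.decPred fun j : Fin n => ∃ a b : ℤ, (σ ^ a * π ^ b) k = j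
  Finset.univ.filter (fun j => ∃ a b : ℤ, (σ ^ a * π ^ b) k = j)

/-- The set of orbits of the group generated by `σ` and `π` on `Fin n`. -/
noncomputable def orbs2 (n : ℕ) (σ π : Equiv.Perm (Fin n)) : Finset (Finset (Fin n)) :=
  Finset.univ.image (orb2 n σ π)

section Action

variable {n : ℕ}

lemma Rf_zero (σ : Equiv.Perm (Fin n)) : Rf n σ 0 = 0 := by
  simp [Rf]

lemma Rf_single (σ : Equiv.Perm (Fin n)) (i : Fin n) (c : ZMod 2) :
    Rf n σ (Pi.single i c) = 0 := by
  refine Finset.sum_eq_zero fun p hp => ?_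
  have hne : p.1 ≠ p.2 := (Finset.mem_filter.mp hp).2.1.ne
  by_cases h : p.1 = i
  · subst h
    rw [Pi.single_eq_of_ne hne.symm, mul_zero]
  · rw [Pi.single_eq_of_ne h, zero_mul]

lemma actH_bijective (σ : Equiv.Perm (Fin n)) : Function.Bijective (actH n σ) := by
  refine Function.bijective_iff_has_inverse.mpr ⟨actH n σ⁻¹, fun g => ?_, fun g => ?_⟩
  · rw [← actH_comp, inv_mul_cancel, actH_one_perm]
  · rw [← actH_comp, mul_inv_cancel, actH_one_perm]

lemma actH_xgen (σ : Equiv.Perm (Fin n)) (i : Fin n) : actH n σ (xgen n i) = xgen n (σ i) := by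
  ext : 1
  · exact Pi.single_comp_equiv σ.symm i 1
  · exact (zero_add _).trans (Rf_single σ i 1)

lemma actH_eps (σ : Equiv.Perm (Fin n)) : actH n σ (eps n) = eps n := by
  ext : 1
  · rfl
  · exact (congrArg _ (Rf_zero σ)).trans (add_zero 1)

end Action

theorem actH_is_action_by_automorphisms_general (n : ℕ) :
    (∀ σ : Equiv.Perm (Fin n), ∀ g h : H n,
      actH n σ (g * h) = actH n σ g * actH n σ h) ∧
    (∀ σ : Equiv.Perm (Fin n), Function.Bijective (actH n σ)) ∧
    (∀ σ : Equiv.Perm (Fin n), ∀ i : Fin n, actH n σ (xgen n i) = xgen n (σ i)) ∧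
    (∀ σ : Equiv.Perm (Fin n), actH n σ (eps n) = eps n) ∧
    (∀ σ τ : Equiv.Perm (Fin n), ∀ g : H n,
      actH n (σ * τ) g = actH n σ (actH n τ g)) ∧
    (∀ g : H n, actH n 1 g = g) :=
  ⟨actH_mul, actH_bijective, actH_xgen, actH_eps, actH_comp, actH_one_perm⟩

/-- For every `σ ∈ Sₙ`, the map `σ·(a,b) = (a∘σ⁻¹, b + Σ_{i<j, σ(i)>σ(j)} a(i)a(j))`
is a group automorphism of `H n` satisfying `σ·x_i = x_{σ(i)}` and `σ·ε = ε`, and these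
maps define an action of `Sₙ` on `H n` by automorphisms. -/
theorem actH_is_action_by_automorphisms (n : ℕ) (hn : 0 < n) :
    (∀ σ : Equiv.Perm (Fin n), ∀ g h : H n,
      actH n σ (g * h) = actH n σ g * actH n σ h) ∧
    (∀ σ : Equiv.Perm (Fin n), Function.Bijective (actH n σ)) ∧
    (∀ σ : Equiv.Perm (Fin n), ∀ i : Fin n, actH n σ (xgen n i) = xgen n (σ i)) ∧
    (∀ σ : Equiv.Perm (Fin n), actH n σ (eps n) = eps n) ∧
    (∀ σ τ : Equiv.Perm (Fin n), ∀ g : H n,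
      actH n (σ * τ) g = actH n σ (actH n τ g)) ∧
    (∀ g : H n, actH n 1 g = g) :=
  actH_is_action_by_automorphisms_general n
end

section
/- The map p: G_n → B_n given by ((a,b),σ) ↦ (a,σ) is a surjective group homomorphism with kernel equal to the central subgroup {1, ε̂} generated by ε̂ = ((0,1),1); consequently the quotient G_n/⟨ε̂⟩ is isomorphic to the hyperoctahedral group B_n, so G_n is a central extension of B_n by ZMod 2. -/
open Finset Equiv

section MainAux

variable {n : ℕ}

private lemma pG_mul' (x y : G n) : pG n (x * y) = pG n x * pG n y := by
  refine B.ext ?_ rfl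
  rfl

/-- `pG` as a monoid hom. -/
private def pHom (n : ℕ) : G n →* B n where
  toFun := pG n
  map_one' := rfl
  map_mul' := pG_mul'

private lemma pG_surj : Function.Surjective (pG n) := by
  intro b
  exact ⟨⟨⟨b.a, 0⟩, b.s⟩, rfl⟩

private lemma epsG_sq : epsG n * epsG n = 1 := by
  refine G.ext ?_ rfl
  show (⟨0, 1⟩ : H n) * actH n 1 ⟨0, 1⟩ = 1
  rw [actH_one_perm]
  refine H.ext ?_ ?_
  · show (0 : Fin n → ZMod 2) + 0 = 0
    simp
  · show (1 : ZMod 2) + 1 + Qf n 0 0 = 0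
    simp
    decide

private lemma epsG_inv : (epsG n)⁻¹ = epsG n :=
  inv_eq_of_mul_eq_one_right epsG_sq

private lemma ker_eq : {x : G n | pG n x = 1} = ({1, epsG n} : Set (G n)) := by
  ext x
  simp only [Set.mem_setOf_eq, Set.mem_insert_iff, Set.mem_singleton_iff]
  constructor
  · intro hx
    have ha : x.h.a = 0 := congrArg B.a hx
    have hs : x.s = 1 := congrArg B.s hx
    have hb : x.h.b = 0 ∨ x.h.b = 1 := by
      generalize x.h.b = u; revert u; decide
    rcases hb with hb | hb
    · left; exact G.ext (H.ext ha hb) hs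
    · right; exact G.ext (H.ext ha hb) hs
  · rintro (rfl | rfl) <;> rfl

private lemma zpowers_eps :
    (Subgroup.zpowers (epsG n) : Set (G n)) = {1, epsG n} := by
  ext x
  simp only [SetLike.mem_coe, Subgroup.mem_zpowers_iff, Set.mem_insert_iff,
    Set.mem_singleton_iff]
  constructor
  · rintro ⟨m, rfl⟩
    have key : ∀ m : ℤ, epsG n ^ m = 1 ∨ epsG n ^ m = epsG n := by
      intro m
      have hdecomp : m = 2 * (m / 2) + m % 2 := (Int.mul_ediv_add_emod m 2).symm
      have h2 : epsG n ^ (2 * (m / 2)) = 1 := by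
        rw [zpow_mul]
        have : epsG n ^ (2 : ℤ) = 1 := by
          rw [show (2 : ℤ) = (2 : ℕ) by norm_num, zpow_natCast, pow_two, epsG_sq]
        rw [this, one_zpow]
      have hr : m % 2 = 0 ∨ m % 2 = 1 := Int.emod_two_eq_zero_or_one m
      rcases hr with hr | hr
      · left; rw [hdecomp, zpow_add, h2, hr, zpow_zero, one_mul]
      · right; rw [hdecomp, zpow_add, h2, hr, zpow_one, one_mul]
    exact key m
  · rintro (rfl | rfl)
    · exact ⟨0, by simp⟩
    · exact ⟨1, by simp⟩

private lemma epsG_central (g : G n) : g * epsG n = epsG n * g := by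
  refine G.ext ?_ ?_
  · show g.h * actH n g.s ⟨0, 1⟩ = (⟨0, 1⟩ : H n) * actH n 1 g.h
    rw [actH_one_perm]
    have hact : actH n g.s (⟨0, 1⟩ : H n) = ⟨0, 1⟩ := by
      refine H.ext ?_ ?_
      · funext i; rfl
      · show (1 : ZMod 2) + Rf n g.s 0 = 1
        simp [Rf]
    rw [hact]
    refine H.ext ?_ ?_
    · show g.h.a + 0 = 0 + g.h.a
      simp
    · show g.h.b + 1 + Qf n g.h.a 0 = 1 + g.h.b + Qf n 0 g.h.a
      simp
      ring
  · show g.s * 1 = 1 * g.s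
    rw [mul_one, one_mul]

private lemma zpowers_le_center :
    (Subgroup.zpowers (epsG n)) ≤ Subgroup.center (G n) := by
  rw [Subgroup.zpowers_le]
  rw [Subgroup.mem_center_iff]
  exact epsG_central

private lemma pHom_ker : (pHom n).ker = Subgroup.zpowers (epsG n) := by
  apply SetLike.coe_injective
  show {x : G n | pG n x = 1} = _
  rw [ker_eq, zpowers_eps]

end MainAux

/-- The map `p : G n → B n`, `((a,b),σ) ↦ (a,σ)`, is a surjective group homomorphism
with kernel the central subgroup `{1, ε̂}` generated by `ε̂ = ((0,1),1)`; consequently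
`G n / ⟨ε̂⟩ ≅ B n`, so `G n` is a central extension of `B n` by `ZMod 2`. -/
theorem pG_hom_ker_quotient (n : ℕ) (hn : 0 < n) :
    (∀ x y : G n, pG n (x * y) = pG n x * pG n y) ∧
    Function.Surjective (pG n) ∧
    {x : G n | pG n x = 1} = ({1, epsG n} : Set (G n)) ∧
    (Subgroup.zpowers (epsG n) : Set (G n)) = {1, epsG n} ∧
    (Subgroup.zpowers (epsG n)) ≤ Subgroup.center (G n) ∧
    ∃ hN : (Subgroup.zpowers (epsG n)).Normal,
      Nonempty ((G n ⧸ Subgroup.zpowers (epsG n)) ≃* B n) := by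
  have hN : (Subgroup.zpowers (epsG n)).Normal := by
    refine ⟨fun h hm g => ?_⟩
    have hc := Subgroup.mem_center_iff.mp (zpowers_le_center hm)
    rw [hc g, mul_inv_cancel_right]
    exact hm
  haveI := hN
  exact ⟨pG_mul', pG_surj, ker_eq, zpowers_eps, zpowers_le_center, hN,
    ⟨(QuotientGroup.quotientMulEquivOfEq pHom_ker.symm).trans
      (QuotientGroup.quotientKerEquivOfSurjective (pHom n) pG_surj)⟩⟩
end

section
/- Let c = (i₁ i₂ … i_k) ∈ S_n be a k-cycle on distinct indices i₁, …, i_k ∈ Fin n, let σ = (0, c) ∈ B_n, and let τ = (e_{i₁} + ⋯ + e_{i_k}, 1) ∈ B_n. Then σ and τ commute and φ(σ, τ) = ε̂^(k−1). -/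
open Finset Equiv

open scoped commutatorElement

/-!
If `σ̃ = ((0, b₁), c)` and `τ̃ = ((a, b₂), 1)` with `a` invariant under `c`, then
`σ̃ τ̃ = ε̂ ^ R(c, a) τ̃ σ̃`, where `R(c, a) = Σ_{i<j, c j < c i} a i a j` counts the inversions of
`c` inside `{a = 1}`. On permutations supported in `{a = 1}`, `R(·, a)` is additive and takes the
value `1` on every transposition, so it is the sign character written additively; a `k`-cycle has
sign `(-1)^(k-1)`.
-/

section Inversions

variable {n : ℕ}

theorem Rf_one (a : Fin n → ZMod 2) : Rf n 1 a = 0 := by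
  rw [Rf]
  refine Finset.sum_eq_zero fun p hp => ?_
  rw [Finset.mem_filter] at hp
  exact absurd hp.2.2 (asymm hp.2.1)

theorem Rf_mul_of_comp_symm_eq_self {σ τ : Perm (Fin n)} {a : Fin n → ZMod 2}
    (h : a ∘ τ.symm = a) : Rf n (σ * τ) a = Rf n σ a + Rf n τ a := by
  rw [Rf_comp, h, add_comm]

theorem Rf_swap_of_lt {x y : Fin n} (hxy : x < y) (a : Fin n → ZMod 2) :
    Rf n (swap x y) a = a x * a y + ∑ m ∈ Finset.Ioo x y, (a x * a m + a m * a y) := by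
  rw [Rf]
  have hinv : Finset.univ.filter
        (fun p : Fin n × Fin n => p.1 < p.2 ∧ swap x y p.2 < swap x y p.1)
      = insert (x, y) ((Finset.Ioo x y).image (fun m => (x, m)) ∪
          (Finset.Ioo x y).image (fun m => (m, y))) := by
    ext ⟨i, j⟩
    rw [Finset.mem_filter]
    simp only [Finset.mem_univ, true_and, Finset.mem_insert, Finset.mem_union,
      Finset.mem_image, Finset.mem_Ioo, Prod.mk.injEq, swap_apply_def]
    split_ifs <;> grind
  rw [hinv, Finset.sum_insert, Finset.sum_union, Finset.sum_image, Finset.sum_image,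
    Finset.sum_add_distrib]
  · exact fun _ _ _ _ h => (Prod.mk.inj h).1
  · exact fun _ _ _ _ h => (Prod.mk.inj h).2
  · simp only [Finset.disjoint_left, Finset.mem_image, Finset.mem_Ioo]
    grind
  · simp only [Finset.mem_union, Finset.mem_image, Finset.mem_Ioo]
    grind

theorem Rf_swap_eq_one {x y : Fin n} (hxy : x ≠ y) {a : Fin n → ZMod 2} (hx : a x = 1)
    (hy : a y = 1) : Rf n (swap x y) a = 1 := by
  rcases hxy.lt_or_gt with h | h
  · simp [Rf_swap_of_lt h, hx, hy, CharTwo.add_self_eq_zero]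
  · simp [swap_comm x y, Rf_swap_of_lt h, hx, hy, CharTwo.add_self_eq_zero]

theorem comp_symm_eq_self_of_support {σ : Perm (Fin n)} {a : Fin n → ZMod 2}
    (hσ : ∀ i ∈ σ.support, a i = 1) : a ∘ σ.symm = a := by
  have h : ∀ i, a (σ i) = a i := fun i => by
    by_cases hi : i ∈ σ.support
    · rw [hσ _ (Perm.apply_mem_support.2 hi), hσ i hi]
    · rw [Perm.notMem_support.1 hi]
  funext i
  simpa using (h (σ.symm i)).symm

theorem sign_eq_neg_one_uzpow_Rf (σ : Perm (Fin n)) {a : Fin n → ZMod 2}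
    (hσ : ∀ i ∈ σ.support, a i = 1) : Perm.sign σ = (-1 : ℤˣ) ^ Rf n σ a := by
  have hp : ∀ i, a (σ i) = 1 ↔ a i = 1 := fun i => by
    by_cases hi : i ∈ σ.support
    · exact iff_of_true (hσ _ (Perm.apply_mem_support.2 hi)) (hσ i hi)
    · rw [Perm.notMem_support.1 hi]
  rw [← Perm.ofSubtype_subtypePerm hp (fun i hi => hσ i (Perm.mem_support.2 hi)),
    Perm.sign_ofSubtype]
  induction σ.subtypePerm (p := fun j => a j = 1) hp using Perm.swap_induction_on with
  | one => simp [Rf_one]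
  | swap_mul τ x y hxy ih =>
    have hτ : a ∘ (Perm.ofSubtype τ).symm = a :=
      comp_symm_eq_self_of_support fun i hi => ((Perm.mem_support_ofSubtype i τ).1 hi).1
    rw [Perm.sign_mul, Perm.sign_swap hxy, ih, map_mul, Perm.ofSubtype_swap_eq,
      Rf_mul_of_comp_symm_eq_self hτ, Rf_swap_eq_one (Subtype.coe_injective.ne hxy) x.2 y.2,
      uzpow_add, uzpow_one, mul_comm]

end Inversions

theorem List.sign_formPerm {α : Type*} [DecidableEq α] [Fintype α] {l : List α} (hl : l.Nodup) :
    Perm.sign l.formPerm = (-1) ^ (l.length - 1) := by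
  match l, hl with
  | [], _ => simp
  | [x], _ => simp
  | x :: y :: l, hl =>
    rw [(List.isCycle_formPerm hl (by simp)).sign, List.support_formPerm_of_nodup _ hl (by simp),
      List.toFinset_card_of_nodup hl]
    simp [pow_succ]

theorem eq_formPerm_ofFn {n k : ℕ} (hk : 0 < k) {f : Fin k → Fin n} (hf : Function.Injective f)
    {c : Perm (Fin n)} (hc : ∀ r : Fin k, c (f r) = f ⟨((r : ℕ) + 1) % k, Nat.mod_lt _ hk⟩)
    (hc' : ∀ j : Fin n, j ∉ Set.range f → c j = j) :
    c = (List.ofFn f).formPerm := by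
  ext j
  by_cases hj : j ∈ Set.range f
  · obtain ⟨r, rfl⟩ := hj
    have h := List.formPerm_apply_getElem _ (List.nodup_ofFn.2 hf) r (by simp)
    simp only [List.getElem_ofFn, List.length_ofFn] at h
    rw [hc, h]
  · rw [hc' j hj, List.formPerm_apply_of_notMem]
    simpa [List.mem_ofFn] using hj

theorem neg_one_uzpow_injective : Function.Injective ((-1 : ℤˣ) ^ · : ZMod 2 → ℤˣ) := by
  decide

theorem Rf_eq_of_cycle {n k : ℕ} (hk : 0 < k) {f : Fin k → Fin n} (hf : Function.Injective f)
    {c : Perm (Fin n)} (hc : ∀ r : Fin k, c (f r) = f ⟨((r : ℕ) + 1) % k, Nat.mod_lt _ hk⟩)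
    (hc' : ∀ j : Fin n, j ∉ Set.range f → c j = j) {a : Fin n → ZMod 2}
    (ha : ∀ i ∈ c.support, a i = 1) : Rf n c a = (k - 1 : ℕ) := by
  have hsign : Perm.sign c = (-1) ^ (k - 1) := by
    rw [eq_formPerm_ofFn hk hf hc hc', List.sign_formPerm (List.nodup_ofFn.2 hf),
      List.length_ofFn]
  apply neg_one_uzpow_injective
  dsimp only
  rw [← sign_eq_neg_one_uzpow_Rf c ha, hsign, uzpow_natCast]

theorem sum_single_one_apply {n k : ℕ} {f : Fin k → Fin n} (hf : Function.Injective f)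
    (r : Fin k) : (∑ r, Pi.single (f r) 1 : Fin n → ZMod 2) (f r) = 1 := by
  simp [Finset.sum_apply, Pi.single_apply, hf.eq_iff]

theorem commutatorElement_eq_of_mul_eq {M : Type*} [Group M] {g h z : M}
    (hgh : g * h = z * (h * g)) : ⁅g, h⁆ = z := by
  rw [commutatorElement_def, hgh]
  group

theorem epsG_pow {n : ℕ} (m : ℕ) : epsG n ^ m = ⟨⟨0, m⟩, 1⟩ := by
  induction m with
  | zero => rfl
  | succ m ih =>
    rw [pow_succ, ih]
    ext <;> simp [epsG, actH_one_perm]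

theorem G.mk_mul_mk_eq_central_mul {n : ℕ} {s : Perm (Fin n)} {a : Fin n → ZMod 2}
    (ha : a ∘ s.symm = a) (b₁ b₂ : ZMod 2) :
    (⟨⟨0, b₁⟩, s⟩ * ⟨⟨a, b₂⟩, 1⟩ : G n) = ⟨⟨0, Rf n s a⟩, 1⟩ * (⟨⟨a, b₂⟩, 1⟩ * ⟨⟨0, b₁⟩, s⟩) := by
  ext
  · simp only [G.mul_h, actH, ha, H.mul_a, Pi.add_apply, Pi.zero_apply, zero_add, Pi.zero_comp,
      add_zero, Function.comp_apply]
    rfl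
  · simp only [G.mul_h, actH, ha, H.mul_b, H.Qf_zero_left, H.Qf_zero_right, add_zero,
      Pi.zero_comp, Rf_one, H.mul_a]
    ring
  · simp

theorem phi_of_cycle_general (n : ℕ) (k : ℕ) (hk : 0 < k)
    (f : Fin k → Fin n) (hf : Function.Injective f)
    (c : Equiv.Perm (Fin n))
    (hc : ∀ r : Fin k, c (f r) = f ⟨((r : ℕ) + 1) % k, Nat.mod_lt _ hk⟩)
    (hc' : ∀ j : Fin n, j ∉ Set.range f → c j = j)
    (σ τ : B n) (hσ : σ = ⟨0, c⟩) (hτ : τ = ⟨∑ r : Fin k, Pi.single (f r) 1, 1⟩)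
    (σt τt : G n) (hσt : pG n σt = σ) (hτt : pG n τt = τ) :
    Commute σ τ ∧ ⁅σt, τt⁆ = epsG n ^ (k - 1) := by
  set a : Fin n → ZMod 2 := ∑ r : Fin k, Pi.single (f r) 1
  have ha : ∀ i ∈ c.support, a i = 1 := fun i hi => by
    obtain ⟨r, rfl⟩ := not_imp_comm.1 (hc' i) (Perm.mem_support.1 hi)
    exact sum_single_one_apply hf r
  have hinv : a ∘ c.symm = a := comp_symm_eq_self_of_support ha
  obtain ⟨⟨_, b₁⟩, _⟩ := σt
  obtain ⟨⟨_, b₂⟩, _⟩ := τt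
  subst hσ hτ
  obtain ⟨rfl, rfl⟩ := B.mk.inj hσt
  obtain ⟨rfl, rfl⟩ := B.mk.inj hτt
  refine ⟨B.ext (by simp [hinv]) rfl, ?_⟩
  rw [commutatorElement_eq_of_mul_eq (G.mk_mul_mk_eq_central_mul hinv b₁ b₂), epsG_pow,
    Rf_eq_of_cycle hk hf hc hc' ha]

/-- For a `k`-cycle `c = (i₁ … i_k) ∈ Sₙ` on distinct indices `i₁, …, i_k` (encoded by
an injective `f : Fin k → Fin n`), `σ = (0, c)` and `τ = (e_{i₁} + ⋯ + e_{i_k}, 1)`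
commute in `B n`, and `φ(σ, τ) = ε̂^(k−1)`. -/
theorem phi_of_cycle (n : ℕ) (hn : 0 < n) (k : ℕ) (hk : 0 < k)
    (f : Fin k → Fin n) (hf : Function.Injective f)
    (c : Equiv.Perm (Fin n))
    (hc : ∀ r : Fin k, c (f r) = f ⟨((r : ℕ) + 1) % k, Nat.mod_lt _ hk⟩)
    (hc' : ∀ j : Fin n, j ∉ Set.range f → c j = j)
    (σ τ : B n) (hσ : σ = ⟨0, c⟩) (hτ : τ = ⟨∑ r : Fin k, Pi.single (f r) 1, 1⟩)
    (σt τt : G n) (hσt : pG n σt = σ) (hτt : pG n τt = τ) :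
    Commute σ τ ∧ ⁅σt, τt⁆ = epsG n ^ (k - 1) :=
  phi_of_cycle_general n k hk f hf c hc hc' σ τ hσ hτ σt τt hσt hτt
end

section
/- Let σ ∈ S_n and let τ = (v, π) ∈ B_n commute with (0, σ). Since π commutes with σ, the group generated by π permutes the orbits of σ on Fin n; let O₁, …, O_z be the orbits of this action on the set of σ-orbits, and for each y let I_y ⊆ Fin n be the union of the σ-orbits belonging to O_y, so that I₁, …, I_z partition Fin n and each I_y is π-invariant. Define τ_y = (v·𝟙_{I_y}, π_y) ∈ B_n, where v·𝟙_{I_y} agrees with v on I_y and is 0 elsewhere, and π_y agrees with π on I_y and is the identity elsewhere. Then each π_y is a well-defined permutation, the elements τ₁, …, τ_z pairwise commute, and τ = τ₁·τ₂·⋯·τ_z. -/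
open Finset Equiv

/-! Since `σ` and `π` commute, `π` maps each orbit of `⟨σ, π⟩` into itself. Restricting
`τ = (v, π)` to π-invariant sets behaves multiplicatively on disjoint sets: the product of the
restrictions to `I` and `J` is the restriction to `I ∪ J`. Hence the restrictions to the
(disjoint) orbits commute, and their product is the restriction to `Fin n`, which is `τ`. -/

section RestrictPerm

open Equiv.Perm

variable {α : Type*} [DecidableEq α] {π : Equiv.Perm α} {I J : Finset α} {i : α}

/-- The junk value `1` is taken when `π` does not map `I` into itself. -/
noncomputable def restrictPerm (π : Equiv.Perm α) (I : Finset α) : Equiv.Perm α :=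
  if h : ∀ i ∈ I, π i ∈ I then ofSubtype (π.subtypePermOfFintype h) else 1

lemma restrictPerm_apply_of_mem (hI : ∀ i ∈ I, π i ∈ I) (hi : i ∈ I) :
    restrictPerm π I i = π i := by
  rw [restrictPerm, dif_pos hI, ofSubtype_apply_of_mem _ hi, subtypePermOfFintype_apply]

lemma restrictPerm_apply_of_notMem (hi : i ∉ I) : restrictPerm π I i = i := by
  unfold restrictPerm
  split_ifs
  · exact ofSubtype_apply_of_not_mem _ hi
  · rfl

lemma restrictPerm_symm_apply_of_notMem (hi : i ∉ I) : (restrictPerm π I).symm i = i :=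
  (Equiv.symm_apply_eq _).2 (restrictPerm_apply_of_notMem hi).symm

lemma restrictPerm_symm_apply_mem (hi : i ∈ I) : (restrictPerm π I).symm i ∈ I := by
  by_contra h
  rw [← restrictPerm_apply_of_notMem (π := π) h, Equiv.apply_symm_apply] at h
  exact h hi

lemma restrictPerm_univ [Fintype α] : restrictPerm π Finset.univ = π :=
  Equiv.ext fun _ =>
    restrictPerm_apply_of_mem (fun _ _ => Finset.mem_univ _) (Finset.mem_univ _)

lemma restrictPerm_mul_of_disjoint (hI : ∀ i ∈ I, π i ∈ I) (hJ : ∀ i ∈ J, π i ∈ J)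
    (hIJ : Disjoint I J) : restrictPerm π I * restrictPerm π J = restrictPerm π (I ∪ J) := by
  have hIJinv : ∀ i ∈ I ∪ J, π i ∈ I ∪ J := by
    simp only [Finset.mem_union]
    rintro i (hi | hi)
    exacts [Or.inl (hI i hi), Or.inr (hJ i hi)]
  ext i
  rw [Equiv.Perm.mul_apply]
  by_cases hiJ : i ∈ J
  · rw [restrictPerm_apply_of_mem hJ hiJ,
      restrictPerm_apply_of_notMem (Finset.disjoint_right.1 hIJ (hJ i hiJ)),
      restrictPerm_apply_of_mem hIJinv (Finset.mem_union_right _ hiJ)]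
  · rw [restrictPerm_apply_of_notMem hiJ]
    by_cases hiI : i ∈ I
    · rw [restrictPerm_apply_of_mem hI hiI,
        restrictPerm_apply_of_mem hIJinv (Finset.mem_union_left _ hiI)]
    · rw [restrictPerm_apply_of_notMem hiI,
        restrictPerm_apply_of_notMem (by simp [hiI, hiJ])]

end RestrictPerm

namespace B

variable {n : ℕ}

noncomputable def restrict (x : B n) (I : Finset (Fin n)) : B n :=
  ⟨fun i => if i ∈ I then x.a i else 0, restrictPerm x.s I⟩

lemma restrict_univ (x : B n) : x.restrict Finset.univ = x := by
  ext i
  · simp [restrict]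
  · simp [restrict, restrictPerm_univ]

lemma restrict_mul_restrict_of_disjoint (x : B n) {I J : Finset (Fin n)}
    (hI : ∀ i ∈ I, x.s i ∈ I) (hJ : ∀ i ∈ J, x.s i ∈ J) (hIJ : Disjoint I J) :
    x.restrict I * x.restrict J = x.restrict (I ∪ J) := by
  refine B.ext (funext fun i => ?_) (restrictPerm_mul_of_disjoint hI hJ hIJ)
  simp only [restrict, mul_a, Pi.add_apply, Function.comp_apply, Finset.mem_union]
  by_cases hiI : i ∈ I
  · have hiJ : (restrictPerm x.s I).symm i ∉ J :=
      Finset.disjoint_left.1 hIJ (restrictPerm_symm_apply_mem hiI)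
    simp [hiI, hiJ]
  · simp [hiI, restrictPerm_symm_apply_of_notMem hiI]

lemma commute_restrict_of_disjoint (x : B n) {I J : Finset (Fin n)}
    (hI : ∀ i ∈ I, x.s i ∈ I) (hJ : ∀ i ∈ J, x.s i ∈ J) (hIJ : Disjoint I J) :
    Commute (x.restrict I) (x.restrict J) := by
  rw [Commute, SemiconjBy, restrict_mul_restrict_of_disjoint x hI hJ hIJ,
    restrict_mul_restrict_of_disjoint x hJ hI hIJ.symm, Finset.union_comm]

lemma noncommProd_restrict (x : B n) (S : Finset (Finset (Fin n)))
    (hinv : ∀ I ∈ S, ∀ i ∈ I, x.s i ∈ I)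
    (hdisj : (S : Set (Finset (Fin n))).PairwiseDisjoint id)
    (hcomm : (S : Set (Finset (Fin n))).Pairwise
      fun I J => Commute (x.restrict I) (x.restrict J)) :
    S.noncommProd x.restrict hcomm = x.restrict (S.sup id) := by
  induction S using Finset.induction_on with
  | empty => ext i <;> simp [restrict, restrictPerm_apply_of_notMem]
  | @insert I S hIS ih =>
    have hsup : ∀ i ∈ S.sup id, x.s i ∈ S.sup id := by
      simp only [Finset.mem_sup, id]
      rintro i ⟨J, hJ, hiJ⟩
      exact ⟨J, hJ, hinv J (Finset.mem_insert_of_mem hJ) i hiJ⟩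
    have hdisjI : Disjoint I (S.sup id) := Finset.disjoint_sup_right.2 fun J hJ =>
      hdisj (Finset.mem_insert_self I S) (Finset.mem_insert_of_mem hJ)
        (ne_of_mem_of_not_mem hJ hIS).symm
    rw [Finset.noncommProd_insert_of_notMem _ _ _ _ hIS,
      ih (fun J hJ => hinv J (Finset.mem_insert_of_mem hJ))
        (hdisj.subset (Finset.coe_subset.2 (Finset.subset_insert I S))),
      restrict_mul_restrict_of_disjoint x (hinv I (Finset.mem_insert_self I S)) hsup hdisjI,
      Finset.sup_insert, id]
    rfl

end B

lemma Commute.zpow_mul_zpow_mul_zpow_mul_zpow {G : Type*} [Group G] {x y : G} (h : Commute x y)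
    (a b c d : ℤ) : x ^ a * y ^ b * (x ^ c * y ^ d) = x ^ (a + c) * y ^ (b + d) := by
  rw [zpow_add, zpow_add]
  exact (h.symm.zpow_zpow b c).mul_mul_mul_comm _ _

section Orbits

variable {n : ℕ} {σ π : Equiv.Perm (Fin n)}

lemma mem_orb2 {k j : Fin n} : j ∈ orb2 n σ π k ↔ ∃ a b : ℤ, (σ ^ a * π ^ b) k = j := by
  rw [orb2]
  simp only [Finset.mem_filter, Finset.mem_univ, true_and]

lemma mem_orb2_self (k : Fin n) : k ∈ orb2 n σ π k :=
  mem_orb2.2 ⟨0, 0, by simp⟩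

lemma orb2_eq_of_mem (hσπ : Commute σ π) {k j : Fin n} (hj : j ∈ orb2 n σ π k) :
    orb2 n σ π j = orb2 n σ π k := by
  obtain ⟨c, d, rfl⟩ := mem_orb2.1 hj
  ext i
  simp only [mem_orb2]
  constructor
  · rintro ⟨a, b, rfl⟩
    exact ⟨a + c, b + d, by rw [← hσπ.zpow_mul_zpow_mul_zpow_mul_zpow]; rfl⟩
  · rintro ⟨a, b, rfl⟩
    refine ⟨a - c, b - d, ?_⟩
    rw [← Equiv.Perm.mul_apply, hσπ.zpow_mul_zpow_mul_zpow_mul_zpow]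
    simp

lemma apply_mem_orb2 (hσπ : Commute σ π) {k j : Fin n} (hj : j ∈ orb2 n σ π k) :
    π j ∈ orb2 n σ π k := by
  obtain ⟨a, b, rfl⟩ := mem_orb2.1 hj
  refine mem_orb2.2 ⟨0 + a, 1 + b, ?_⟩
  rw [← hσπ.zpow_mul_zpow_mul_zpow_mul_zpow]
  simp [Equiv.Perm.mul_apply]

lemma apply_mem_of_mem_orbs2 (hσπ : Commute σ π) {I : Finset (Fin n)}
    (hI : I ∈ orbs2 n σ π) :
    ∀ i ∈ I, π i ∈ I := by
  obtain ⟨k, -, rfl⟩ := Finset.mem_image.1 hI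
  exact fun _ => apply_mem_orb2 hσπ

lemma pairwiseDisjoint_orbs2 (hσπ : Commute σ π) :
    (orbs2 n σ π : Set (Finset (Fin n))).PairwiseDisjoint id := by
  rintro _ hI _ hJ hIJ
  obtain ⟨k, -, rfl⟩ := Finset.mem_image.1 hI
  obtain ⟨l, -, rfl⟩ := Finset.mem_image.1 hJ
  refine Finset.disjoint_left.2 fun i hik hil => hIJ ?_
  exact (orb2_eq_of_mem hσπ hik).symm.trans (orb2_eq_of_mem hσπ hil)

lemma sup_orbs2 : (orbs2 n σ π).sup id = Finset.univ :=
  Finset.eq_univ_of_forall fun k => Finset.mem_sup.2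
    ⟨orb2 n σ π k, Finset.mem_image_of_mem _ (Finset.mem_univ k), mem_orb2_self k⟩

end Orbits

theorem tau_factorization_general (n : ℕ) (σ : Equiv.Perm (Fin n))
    (v : Fin n → ZMod 2) (π : Equiv.Perm (Fin n))
    (hc : Commute ((⟨0, σ⟩ : B n)) ⟨v, π⟩) :
    ∃ t : Finset (Fin n) → B n,
      (∀ I ∈ orbs2 n σ π, ∃ πI : Equiv.Perm (Fin n),
          (∀ i ∈ I, πI i = π i) ∧ (∀ i ∉ I, πI i = i) ∧
          t I = ⟨fun i => if i ∈ I then v i else 0, πI⟩) ∧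
      (∀ I ∈ orbs2 n σ π, ∀ J ∈ orbs2 n σ π, Commute (t I) (t J)) ∧
      ∃ hcomm : (↑(orbs2 n σ π) : Set (Finset (Fin n))).Pairwise
          (fun I J => Commute (t I) (t J)),
        (orbs2 n σ π).noncommProd t hcomm = (⟨v, π⟩ : B n) := by
  have hσπ : Commute σ π := congrArg B.s hc
  have hinv := fun I (hI : I ∈ orbs2 n σ π) => apply_mem_of_mem_orbs2 hσπ hI
  set x : B n := ⟨v, π⟩
  have hcomm : ∀ I ∈ orbs2 n σ π, ∀ J ∈ orbs2 n σ π,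
      Commute (x.restrict I) (x.restrict J) := by
    intro I hI J hJ
    obtain rfl | hIJ := eq_or_ne I J
    · exact Commute.refl _
    · exact x.commute_restrict_of_disjoint (hinv I hI) (hinv J hJ)
        (pairwiseDisjoint_orbs2 hσπ hI hJ hIJ)
  refine ⟨x.restrict, fun I hI => ⟨restrictPerm π I,
    fun _ => restrictPerm_apply_of_mem (hinv I hI), fun _ => restrictPerm_apply_of_notMem, rfl⟩,
    hcomm, fun I hI J hJ _ => hcomm I hI J hJ, ?_⟩
  exact (x.noncommProd_restrict _ hinv (pairwiseDisjoint_orbs2 hσπ) _).trans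
    (by rw [sup_orbs2, B.restrict_univ])

/-- Let `σ ∈ Sₙ` and let `τ = (v, π) ∈ B n` commute with `(0, σ)`. The sets
`I₁, …, I_z` (unions of the `σ`-orbits in one orbit of `⟨π⟩` acting on `σ`-orbits, i.e.
the orbits of `⟨σ, π⟩` on `Fin n`, here `orbs2 n σ π`) partition `Fin n`; for each such
`I` the factor `τ_I = (v·𝟙_I, π_I)` is well defined (`π_I` agreeing with `π` on `I`,
identity elsewhere, is a permutation), the `τ_I` pairwise commute and `τ = ∏_I τ_I`. -/
theorem tau_factorization (n : ℕ) (hn : 0 < n) (σ : Equiv.Perm (Fin n))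
    (v : Fin n → ZMod 2) (π : Equiv.Perm (Fin n))
    (hc : Commute ((⟨0, σ⟩ : B n)) ⟨v, π⟩) :
    ∃ t : Finset (Fin n) → B n,
      (∀ I ∈ orbs2 n σ π, ∃ πI : Equiv.Perm (Fin n),
          (∀ i ∈ I, πI i = π i) ∧ (∀ i ∉ I, πI i = i) ∧
          t I = ⟨fun i => if i ∈ I then v i else 0, πI⟩) ∧
      (∀ I ∈ orbs2 n σ π, ∀ J ∈ orbs2 n σ π, Commute (t I) (t J)) ∧
      ∃ hcomm : (↑(orbs2 n σ π) : Set (Finset (Fin n))).Pairwise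
          (fun I J => Commute (t I) (t J)),
        (orbs2 n σ π).noncommProd t hcomm = (⟨v, π⟩ : B n) :=
  tau_factorization_general n σ v π hc
end
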